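/- arXiv:0804.3386 — 2 statements merged into one kernel-verified Lean document; each statement's English description precedes it below -/
import Mathlib

section
/- For s ≥ 3, a countable K_s-free graph Γ is a universal homogeneous K_s-free graph if and only if for any two disjoint finite subsets U, W of vertices such that the induced subgraph on U is K_{s-1}-free, there exists a vertex v joined to all vertices of U and to no vertex of W. -/
/-- Every finite K_s-free graph embeds into G as an induced subgraph. -/
def IsUniversalKFree (s : ℕ) (G : SimpleGraph ℕ) : Prop :=
  ∀ (n : ℕ) (γ : SimpleGraph (Fin n)), γ.CliqueFree s → Nonempty (γ ↪g G)

/-- Every isomorphism between finite induced subgraphs extends to an automorphism. -/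
def IsHomogeneous (G : SimpleGraph ℕ) : Prop :=
  ∀ (A B : Finset ℕ) (φ : {x // x ∈ A} ≃ {x // x ∈ B}),
    (∀ a a' : {x // x ∈ A}, G.Adj ↑a ↑a' ↔ G.Adj ↑(φ a) ↑(φ a')) →
    ∃ g : G ≃g G, ∀ a : {x // x ∈ A}, g ↑a = ↑(φ a)

/-!
The extension property is exactly what a back-and-forth argument needs. Given a finite partial
isomorphism and a new vertex `x`, a vertex `v` realising the adjacency pattern of `x` over the
image extends it by `x ↦ v`; this pattern may be prescribed because the neighbours of `x` in the
domain span a `K_{s-1}`-free set, as `x` would complete any `K_{s-1}` among them to a `K_s`.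
Going forth alone embeds every finite `K_s`-free graph; going back and forth along ℕ extends every
finite partial isomorphism of `G` to an automorphism. Conversely, given `U` and `W`, embed the
graph induced on `U ∪ W` together with one extra vertex joined exactly to `U` (still `K_s`-free),
and use homogeneity to move the copy of `U ∪ W` back onto `U ∪ W`: the extra vertex lands on the
required `v`.
-/

open Finset

namespace SimpleGraph

variable {α β ι V : Type*} {H : SimpleGraph α} {G : SimpleGraph β} {n : ℕ}

def ExtensionProperty (G : SimpleGraph V) (n : ℕ) : Prop :=
  ∀ U W : Finset V, Disjoint U W → (G.induce ↑U).CliqueFree n →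
    ∃ v, v ∉ U ∧ v ∉ W ∧ (∀ u ∈ U, G.Adj v u) ∧ ∀ w ∈ W, ¬ G.Adj v w

/-- Partial isomorphisms are encoded by their graphs `S ⊆ α × β`, so that inverting one is just
`Prod.swap`. -/
def IsPartialIso (H : SimpleGraph α) (G : SimpleGraph β) (S : Set (α × β)) : Prop :=
  ∀ p ∈ S, ∀ q ∈ S, (p.1 = q.1 ↔ p.2 = q.2) ∧ (H.Adj p.1 q.1 ↔ G.Adj p.2 q.2)

namespace IsPartialIso

variable {S T : Set (α × β)}

theorem mono (hS : IsPartialIso H G S) (hT : T ⊆ S) : IsPartialIso H G T :=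
  fun p hp q hq => hS p (hT hp) q (hT hq)

theorem symm (hS : IsPartialIso H G S) : IsPartialIso G H (Prod.swap ⁻¹' S) :=
  fun _ hp _ hq => ⟨(hS _ hp _ hq).1.symm, (hS _ hp _ hq).2.symm⟩

theorem injOn_fst (hS : IsPartialIso H G S) : S.InjOn Prod.fst :=
  fun p hp q hq h => Prod.ext h (((hS p hp q hq).1).1 h)

theorem injOn_snd (hS : IsPartialIso H G S) : S.InjOn Prod.snd :=
  fun p hp q hq h => Prod.ext (((hS p hp q hq).1).2 h) h

theorem cliqueFreeOn_image_snd (hS : IsPartialIso H G S)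
    (hH : H.CliqueFreeOn (Prod.fst '' S) n) : G.CliqueFreeOn (Prod.snd '' S) n := by
  classical
  intro t ht hclique
  obtain ⟨R, hRS, rfl⟩ := Finset.subset_set_image_iff.1 ht
  refine hH (t := R.image Prod.fst) (by simpa using Set.image_mono hRS) ⟨?_, ?_⟩
  · rintro _ ha _ hb hab
    simp only [coe_image, Set.mem_image, mem_coe] at ha hb
    obtain ⟨p, hp, rfl⟩ := ha
    obtain ⟨q, hq, rfl⟩ := hb
    have hpq := hS p (hRS hp) q (hRS hq)
    refine hpq.2.2 (hclique.1 (mem_image_of_mem _ hp) (mem_image_of_mem _ hq) ?_)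
    exact fun h => hab (hpq.1.2 h)
  · rw [card_image_of_injOn (hS.mono hRS).injOn_fst, ← hclique.2,
      card_image_of_injOn (hS.mono hRS).injOn_snd]

theorem exists_embedding (hS : IsPartialIso H G S) (htot : ∀ a, ∃ b, (a, b) ∈ S) :
    ∃ e : H ↪g G, ∀ p ∈ S, e p.1 = p.2 := by
  choose f hf using htot
  have hfS : ∀ p ∈ S, f p.1 = p.2 := fun p hp => ((hS _ (hf p.1) p hp).1).1 rfl
  refine ⟨⟨⟨f, fun a b h => ((hS _ (hf a) _ (hf b)).1).2 h⟩,
    fun {a b} => ((hS _ (hf a) _ (hf b)).2).symm⟩, hfS⟩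

theorem exists_iso (hS : IsPartialIso H G S) (htot : ∀ a, ∃ b, (a, b) ∈ S)
    (hsurj : ∀ b, ∃ a, (a, b) ∈ S) : ∃ e : H ≃g G, ∀ p ∈ S, e p.1 = p.2 := by
  obtain ⟨e, he⟩ := hS.exists_embedding htot
  refine ⟨RelIso.ofSurjective e fun b => ?_, he⟩
  obtain ⟨a, ha⟩ := hsurj b
  exact ⟨a, he _ ha⟩

end IsPartialIso

theorem isPartialIso_insert {S : Set (α × β)} {x : α} {y : β} (hS : IsPartialIso H G S)
    (h : ∀ p ∈ S, (x = p.1 ↔ y = p.2) ∧ (H.Adj x p.1 ↔ G.Adj y p.2)) :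
    IsPartialIso H G (insert (x, y) S) := by
  rintro p (rfl | hp) q (rfl | hq)
  · exact ⟨iff_of_true rfl rfl, iff_of_false H.irrefl G.irrefl⟩
  · exact h q hq
  · exact ⟨eq_comm.trans ((h p hp).1.trans eq_comm), H.adj_comm _ _ |>.trans
      ((h p hp).2.trans (G.adj_comm _ _))⟩
  · exact hS p hp q hq

theorem isPartialIso_range {f : ι → α} {g : ι → β} (heq : ∀ i j, f i = f j ↔ g i = g j)
    (hadj : ∀ i j, H.Adj (f i) (f j) ↔ G.Adj (g i) (g j)) :
    IsPartialIso H G (Set.range fun i => (f i, g i)) := by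
  rintro _ ⟨i, rfl⟩ _ ⟨j, rfl⟩
  exact ⟨heq i j, hadj i j⟩

theorem isPartialIso_iUnion {S : ι → Set (α × β)} (hdir : Directed (· ⊆ ·) S)
    (hS : ∀ i, IsPartialIso H G (S i)) : IsPartialIso H G (⋃ i, S i) := by
  simp only [IsPartialIso, Set.mem_iUnion]
  rintro p ⟨i, hp⟩ q ⟨j, hq⟩
  obtain ⟨k, hik, hjk⟩ := hdir i j
  exact hS k p (hik hp) q (hjk hq)

theorem IsPartialIso.exists_forth (hH : H.CliqueFree (n + 1)) (hG : G.ExtensionProperty n)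
    {R : Finset (α × β)} (hR : IsPartialIso H G ↑R) (x : α) :
    ∃ y, IsPartialIso H G (insert (x, y) ↑R) := by
  classical
  by_cases hx : ∃ y, (x, y) ∈ R
  · obtain ⟨y, hy⟩ := hx
    exact ⟨y, by rwa [Set.insert_eq_of_mem (mem_coe.2 hy)]⟩
  push Not at hx
  set Rx := R.filter fun p => H.Adj x p.1
  set U := Rx.image Prod.snd
  set W := (R.filter fun p => ¬ H.Adj x p.1).image Prod.snd
  have hUW : Disjoint U W := by
    rw [Finset.disjoint_left]
    simp only [U, W, Rx, mem_image, mem_filter]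
    rintro _ ⟨p, ⟨hp, hxp⟩, rfl⟩ ⟨q, ⟨hq, hxq⟩, hqp⟩
    exact hxq ((hR.injOn_snd hq hp hqp) ▸ hxp)
  have hU : (G.induce ↑U).CliqueFree n := by
    have hN : H.CliqueFreeOn (H.neighborSet x) n := by
      simpa using CliqueFreeOn.of_succ H (CliqueFree.cliqueFreeOn H hH) (Set.mem_univ x)
    rw [cliqueFree_induce_iff, coe_image]
    refine (hR.mono (coe_subset.2 (filter_subset _ R))).cliqueFreeOn_image_snd
      (CliqueFreeOn.subset H ?_ hN)
    rintro _ ⟨p, hp, rfl⟩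
    exact (mem_filter.1 hp).2
  obtain ⟨y, hyU, hyW, hadj, hnadj⟩ := hG U W hUW hU
  refine ⟨y, isPartialIso_insert hR fun p hp => ⟨iff_of_false ?_ ?_, ?_⟩⟩
  · rintro rfl
    exact hx p.2 hp
  · rintro rfl
    by_cases hxp : H.Adj x p.1
    · exact hyU (mem_image_of_mem _ (mem_filter.2 ⟨hp, hxp⟩))
    · exact hyW (mem_image_of_mem _ (mem_filter.2 ⟨hp, hxp⟩))
  · by_cases hxp : H.Adj x p.1
    · exact iff_of_true hxp (hadj _ (mem_image_of_mem _ (mem_filter.2 ⟨hp, hxp⟩)))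
    · exact iff_of_false hxp (hnadj _ (mem_image_of_mem _ (mem_filter.2 ⟨hp, hxp⟩)))

theorem IsPartialIso.exists_back (hG : G.CliqueFree (n + 1)) (hH : H.ExtensionProperty n)
    {R : Finset (α × β)} (hR : IsPartialIso H G ↑R) (y : β) :
    ∃ x, IsPartialIso H G (insert (x, y) ↑R) := by
  have hR' : IsPartialIso G H ↑(R.map (Equiv.prodComm α β).toEmbedding) := by
    simpa [Set.image_swap_eq_preimage_swap] using hR.symm
  obtain ⟨x, hx⟩ := hR'.exists_forth hG hH y
  refine ⟨x, ?_⟩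
  convert hx.symm using 1
  ext ⟨a, b⟩
  simp [and_comm]

theorem exists_embedding_of_forth [Finite α]
    (forth : ∀ R : Finset (α × β), IsPartialIso H G ↑R →
      ∀ x, ∃ y, IsPartialIso H G (insert (x, y) ↑R)) :
    Nonempty (H ↪g G) := by
  classical
  have hcover : ∀ A : Finset α,
      ∃ R : Finset (α × β), IsPartialIso H G ↑R ∧ ∀ a ∈ A, ∃ b, (a, b) ∈ R := by
    intro A
    induction A using Finset.induction_on with
    | empty => exact ⟨∅, by simp [IsPartialIso], by simp⟩
    | insert x A _ ih =>
      obtain ⟨R, hR, hRA⟩ := ih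
      obtain ⟨y, hy⟩ := forth R hR x
      refine ⟨insert (x, y) R, by rwa [coe_insert], ?_⟩
      simp only [mem_insert, forall_eq_or_imp]
      exact ⟨⟨y, Or.inl rfl⟩, fun a ha => (hRA a ha).imp fun b hb => Or.inr hb⟩
  have := Fintype.ofFinite α
  obtain ⟨R, hR, htot⟩ := hcover univ
  obtain ⟨e, -⟩ := hR.exists_embedding fun a => htot a (mem_univ a)
  exact ⟨e⟩

theorem exists_iso_of_back_and_forth {H G : SimpleGraph ℕ}
    (forth : ∀ R : Finset (ℕ × ℕ), IsPartialIso H G ↑R →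
      ∀ x, ∃ y, IsPartialIso H G (insert (x, y) ↑R))
    (back : ∀ R : Finset (ℕ × ℕ), IsPartialIso H G ↑R →
      ∀ y, ∃ x, IsPartialIso H G (insert (x, y) ↑R))
    {R₀ : Finset (ℕ × ℕ)} (h₀ : IsPartialIso H G ↑R₀) :
    ∃ e : H ≃g G, ∀ p ∈ R₀, e p.1 = p.2 := by
  have step : ∀ R : Finset (ℕ × ℕ), IsPartialIso H G ↑R → ∀ k, ∃ R' : Finset (ℕ × ℕ),
      IsPartialIso H G ↑R' ∧ R ⊆ R' ∧ (∃ y, (k, y) ∈ R') ∧ ∃ x, (x, k) ∈ R' := by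
    intro R hR k
    obtain ⟨y, hy⟩ := forth R hR k
    obtain ⟨x, hx⟩ := back (insert (k, y) R) (by rwa [coe_insert]) k
    refine ⟨insert (x, k) (insert (k, y) R), by rwa [coe_insert], ?_, ⟨y, by simp⟩, ⟨x, by simp⟩⟩
    exact (subset_insert _ _).trans (subset_insert _ _)
  choose next hnext hsub hdom hran using step
  let chain : ℕ → {R : Finset (ℕ × ℕ) // IsPartialIso H G ↑R} := fun k =>
    Nat.rec ⟨R₀, h₀⟩ (fun k R => ⟨next R.1 R.2 k, hnext R.1 R.2 k⟩) k
  have hmono : Monotone fun k => ((chain k).1 : Set (ℕ × ℕ)) :=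
    monotone_nat_of_le_succ fun k => coe_subset.2 (hsub _ _ k)
  have hS := isPartialIso_iUnion hmono.directed_le fun k => (chain k).2
  obtain ⟨e, he⟩ := hS.exists_iso
    (fun a => (hdom _ _ a).imp fun _ h => Set.mem_iUnion.2 ⟨a + 1, h⟩)
    (fun b => (hran _ _ b).imp fun _ h => Set.mem_iUnion.2 ⟨b + 1, h⟩)
  exact ⟨e, fun p hp => he p (Set.mem_iUnion.2 ⟨0, hp⟩)⟩

def adjoinVertex (G : SimpleGraph V) (U : Set V) : SimpleGraph (Option V) where
  Adj
    | some a, some b => G.Adj a b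
    | none, some b => b ∈ U
    | some a, none => a ∈ U
    | none, none => False
  symm := ⟨by
    rintro (_ | a) (_ | b) h
    exacts [h, h, h, h.symm]⟩
  loopless := ⟨by rintro (_ | a) h; exacts [h, G.irrefl h]⟩

def someEmbeddingAdjoinVertex (G : SimpleGraph V) (U : Set V) : G ↪g G.adjoinVertex U :=
  ⟨Function.Embedding.some, Iff.rfl⟩

theorem CliqueFree.adjoinVertex {G : SimpleGraph V} {U : Set V} (hG : G.CliqueFree (n + 1))
    (hU : G.CliqueFreeOn U n) : (G.adjoinVertex U).CliqueFree (n + 1) := by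
  intro t ht
  have hclique : G.IsClique ↑t.eraseNone := fun a ha b hb hab =>
    ht.1 (mem_eraseNone.1 ha) (mem_eraseNone.1 hb) (Option.some_injective _ |>.ne hab)
  by_cases hnone : none ∈ t
  · refine hU (t := t.eraseNone) (fun a ha => ?_)
      ⟨hclique, by simp [card_eraseNone_of_mem hnone, ht.2]⟩
    exact ht.1 hnone (mem_eraseNone.1 ha) (Option.some_ne_none a).symm
  · exact hG t.eraseNone ⟨hclique, by rw [card_eraseNone_of_not_mem hnone, ht.2]⟩

end SimpleGraph

open SimpleGraph

theorem IsUniversalKFree.nonempty_embedding {s : ℕ} {G : SimpleGraph ℕ}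
    (hG : IsUniversalKFree s G) {V : Type*} [Fintype V] {γ : SimpleGraph V}
    (hγ : γ.CliqueFree s) : Nonempty (γ ↪g G) := by
  let e := Iso.map (Fintype.equivFin V) γ
  obtain ⟨E⟩ := hG _ _ (hγ.comap e.symm.isContained)
  exact ⟨E.comp e.toEmbedding⟩

theorem isHomogeneous_iff {G : SimpleGraph ℕ} : IsHomogeneous G ↔
    ∀ R : Finset (ℕ × ℕ), IsPartialIso G G ↑R → ∃ g : G ≃g G, ∀ p ∈ R, g p.1 = p.2 := by
  constructor
  · intro hG R hR
    have equivImage : ∀ f : ℕ × ℕ → ℕ, Set.InjOn f ↑R →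
        ∃ e : ↥(R : Set (ℕ × ℕ)) ≃ {x // x ∈ R.image f}, ∀ p, (e p : ℕ) = f p :=
      fun f hf => ⟨(Equiv.Set.imageOfInjOn f _ hf).trans (Equiv.subtypeEquivRight (by simp)),
        fun _ => rfl⟩
    obtain ⟨e₁, he₁⟩ := equivImage Prod.fst hR.injOn_fst
    obtain ⟨e₂, he₂⟩ := equivImage Prod.snd hR.injOn_snd
    obtain ⟨g, hg⟩ := hG _ _ (e₁.symm.trans e₂) fun a a' => by
      obtain ⟨p, rfl⟩ := e₁.surjective a
      obtain ⟨q, rfl⟩ := e₁.surjective a'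
      simpa [he₁, he₂] using (hR p p.2 q q.2).2
    refine ⟨g, fun p hp => ?_⟩
    simpa [he₁, he₂] using hg (e₁ ⟨p, hp⟩)
  · intro hG A B φ hφ
    have hR : IsPartialIso G G ↑(univ.image fun a : A => ((a : ℕ), (φ a : ℕ))) := by
      rw [coe_image, coe_univ, Set.image_univ]
      exact isPartialIso_range (fun a a' => by simp [Subtype.ext_iff.symm]) hφ
    obtain ⟨g, hg⟩ := hG _ hR
    exact ⟨g, fun a => hg _ (mem_image_of_mem _ (mem_univ a))⟩

theorem IsHomogeneous.extensionProperty {n : ℕ} {G : SimpleGraph ℕ} (hG : G.CliqueFree (n + 1))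
    (huniv : IsUniversalKFree (n + 1) G) (hhom : IsHomogeneous G) : G.ExtensionProperty n := by
  classical
  intro U W hUW hU
  set A := U ∪ W
  let γ := (G.induce ↑A).adjoinVertex {a | ↑a ∈ U}
  have hγ : γ.CliqueFree (n + 1) := by
    refine (hG.comap (Embedding.induce _).isContained).adjoinVertex fun t ht hclique => ?_
    refine (G.cliqueFree_induce_iff _ _).1 hU (t := t.map (.subtype _)) ?_ ?_
    · simpa [Set.subset_def] using ht
    · exact (isNClique_induce_iff _ _ _).1 hclique
  obtain ⟨E⟩ := huniv.nonempty_embedding hγ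
  let ι := E.comp (someEmbeddingAdjoinVertex _ _)
  have hR : IsPartialIso G G ↑(univ.image fun a : A => (ι a, (a : ℕ))) := by
    rw [coe_image, coe_univ, Set.image_univ]
    exact isPartialIso_range (fun _ _ => ι.injective.eq_iff.trans Subtype.ext_iff)
      fun _ _ => ι.map_adj_iff
  obtain ⟨g, hg⟩ := isHomogeneous_iff.1 hhom _ hR
  have hgι : ∀ a : A, g (E (some a)) = a := fun a => hg _ (mem_image_of_mem _ (mem_univ a))
  have hne : ∀ a : A, g (E none) ≠ a := fun a h => by
    rw [← hgι a] at h
    exact Option.some_ne_none _ (E.injective (g.injective h)).symm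
  have hadj : ∀ a : A, G.Adj (g (E none)) a ↔ (a : ℕ) ∈ U := fun a =>
    calc G.Adj (g (E none)) a ↔ G.Adj (g (E none)) (g (E (some a))) := by rw [hgι]
      _ ↔ γ.Adj none (some a) := g.map_adj_iff.trans E.map_adj_iff
  refine ⟨g (E none), fun hv => hne ⟨_, mem_union_left _ hv⟩ rfl,
    fun hv => hne ⟨_, mem_union_right _ hv⟩ rfl, fun u hu => ?_, fun w hw h => ?_⟩
  · exact (hadj ⟨u, mem_union_left _ hu⟩).2 hu
  · exact disjoint_left.1 hUW ((hadj ⟨w, mem_union_right _ hw⟩).1 h) hw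

theorem ks_free_universality_criterion_general (s : ℕ)
    (G : SimpleGraph ℕ) (hG : G.CliqueFree s) :
    (IsUniversalKFree s G ∧ IsHomogeneous G) ↔
      (∀ U W : Finset ℕ, Disjoint U W →
        (SimpleGraph.induce (↑U : Set ℕ) G).CliqueFree (s - 1) →
        ∃ v : ℕ, v ∉ U ∧ v ∉ W ∧ (∀ u ∈ U, G.Adj v u) ∧ (∀ w ∈ W, ¬ G.Adj v w)) := by
  obtain ⟨n, rfl⟩ : ∃ n, s = n + 1 :=
    Nat.exists_eq_add_one.2 (Nat.pos_of_ne_zero fun h => not_cliqueFree_zero (h ▸ hG))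
  change _ ↔ G.ExtensionProperty n
  refine ⟨fun ⟨huniv, hhom⟩ => hhom.extensionProperty hG huniv, fun hext => ⟨?_, ?_⟩⟩
  · exact fun _ γ hγ => exists_embedding_of_forth fun _ hR x => hR.exists_forth hγ hext x
  · exact isHomogeneous_iff.2 fun _ h₀ => exists_iso_of_back_and_forth
      (fun _ hR x => hR.exists_forth hG hext x) (fun _ hR y => hR.exists_back hG hext y) h₀

theorem ks_free_universality_criterion (s : ℕ) (hs : 3 ≤ s)
    (G : SimpleGraph ℕ) (hG : G.CliqueFree s) :
    (IsUniversalKFree s G ∧ IsHomogeneous G) ↔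
      (∀ U W : Finset ℕ, Disjoint U W →
        (SimpleGraph.induce (↑U : Set ℕ) G).CliqueFree (s - 1) →
        ∃ v : ℕ, v ∉ U ∧ v ∉ W ∧ (∀ u ∈ U, G.Adj v u) ∧ (∀ w ∈ W, ¬ G.Adj v w)) :=
  ks_free_universality_criterion_general s G hG
end

section
/- Let (X, m, E) be a pure measurable graph such that for m^∞-almost every sequence (x_k) the induced countable graph satisfies the universal graph extension property. Then for every n, m ≥ 1 and for m^{n+m}-almost every pair of disjoint tuples (x₁,…,xₙ), (y₁,…,yₘ) in X, the set ⋂ᵢ E_{xᵢ} ∩ ⋂ⱼ (X \ E_{yⱼ}) has positive m-measure. -/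
/-!
Since `μ` is the product measure `m^ℕ`, the pair of tuples may be taken to be the first `n + k`
samples of `ω`, and it suffices that the extension set
`A(ω) = ⋂_{i<n} E_{ω_i} ∩ ⋂_{j<k} (X \ E_{ω_{n+j}})` has positive measure almost surely.
Every later sample `ω_l`, `l ≥ n + k`, is independent of `A(ω)`, so almost surely it lies in
`A(ω)` only if `m(A(ω)) > 0`. Purity makes the samples almost surely distinct, and then the
extension property forces some later sample into `A(ω)`: were every witness among the first
`n + k` samples, the `2^(n+k)` ways of splitting `n + k` further samples into neighbours and
non-neighbours would need pairwise different witnesses.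
-/

open MeasureTheory

def IsIID {X : Type*} [MeasurableSpace X] (m : Measure X) (μ : Measure (ℕ → X)) : Prop :=
  IsProbabilityMeasure μ ∧
  ∀ n : ℕ, Measure.map (fun x (i : Fin n) => x (i : ℕ)) μ = Measure.pi (fun _ : Fin n => m)

open Function Set

theorem MeasureTheory.Measure.infinitePi_map_prodMk_comp {ι α β X : Type*} [MeasurableSpace X]
    (μ : Measure X) [IsProbabilityMeasure μ] [Fintype α] [Fintype β] {f : α → ι}
    {g : β → ι} (hfg : Injective (Sum.elim f g)) :
    (infinitePi fun _ : ι => μ).map (fun ω => (fun a => ω (f a), fun b => ω (g b))) =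
      (Measure.pi fun _ : α => μ).prod (Measure.pi fun _ : β => μ) := by
  have hsplit : (fun (ω : ι → X) => (fun a => ω (f a), fun b => ω (g b))) =
      MeasurableEquiv.sumPiEquivProdPi (fun _ : α ⊕ β => X) ∘
        fun ω s => ω (Sum.elim f g s) := rfl
  rw [hsplit, ← map_map (by fun_prop) (by fun_prop), map_infinitePi_infinitePi_of_inj hfg,
    infinitePi_eq_pi]
  exact (measurePreserving_sumPiEquivProdPi _).map_eq

section Measure

variable {X : Type*} [MeasurableSpace X] {m : Measure X}

theorem IsIID.eq_infinitePi [IsProbabilityMeasure m] {μ : Measure (ℕ → X)} (hμ : IsIID m μ) :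
    μ = Measure.infinitePi fun _ => m := by
  have hlim : IsProjectiveLimit μ fun I : Finset ℕ => Measure.pi fun _ : I => m := by
    intro I
    obtain ⟨L, hL⟩ := I.exists_nat_subset_range
    have hfac : I.restrict =
        (fun (c : Fin L → X) (i : I) => c ⟨i, Finset.mem_range.1 (hL i.2)⟩) ∘
          fun (x : ℕ → X) (i : Fin L) => x i := rfl
    have hν := Measure.isProjectiveLimit_infinitePi (fun _ : ℕ => m) I
    rw [hfac, ← Measure.map_map (by fun_prop) (by fun_prop)] at hν ⊢
    rw [hμ.2, ← hν, Measure.map_infinitePi_infinitePi_of_inj Fin.val_injective,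
      Measure.infinitePi_eq_pi]
  exact hlim.unique (Measure.isProjectiveLimit_infinitePi _)

/-- The diagonal need not be measurable; it lies in the measurable set `T` of pairs with a.e.
equal neighbourhoods, which purity makes null. -/
theorem ae_fst_ne_snd_of_pure [SFinite m] [NullSingletonClass m] {E : Set (X × X)}
    (hE : MeasurableSet E)
    (hpure : ∀ᵐ q ∂(m.prod m), q.1 ≠ q.2 →
      0 < m {y : X | ¬(((q.1, y) ∈ E) ↔ ((q.2, y) ∈ E))}) :
    ∀ᵐ q ∂(m.prod m), q.1 ≠ q.2 := by
  set T : Set (X × X) := {q | m {y | ¬(((q.1, y) ∈ E) ↔ ((q.2, y) ∈ E))} = 0}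
  have hT : MeasurableSet T := by
    have hΔ :
        MeasurableSet {p : (X × X) × X | ¬(((p.1.1, p.2) ∈ E) ↔ ((p.1.2, p.2) ∈ E))} :=
      ((measurableSet_preimage (by fun_prop) hE).iff
        (measurableSet_preimage (by fun_prop) hE)).compl
    exact measurable_measure_prodMk_left hΔ (measurableSet_singleton 0)
  have hT0 : m.prod m T = 0 := by
    refine (Measure.measure_prod_null hT).2 ?_
    filter_upwards [Measure.ae_ae_of_ae_prod hpure] with x hx
    refine measure_eq_zero_iff_ae_notMem.2 ?_
    filter_upwards [hx, m.ae_ne x] with y hxy hyx hyT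
    exact (hxy hyx.symm).ne' hyT
  filter_upwards [measure_eq_zero_iff_ae_notMem.1 hT0] with q hq hq12
  exact hq (by simp [T, hq12])

theorem ae_injective_infinitePi {ι : Type*} [Countable ι] [IsProbabilityMeasure m]
    (h : ∀ᵐ q ∂(m.prod m), q.1 ≠ q.2) :
    ∀ᵐ ω ∂(Measure.infinitePi fun _ : ι => m), Injective ω := by
  suffices ∀ᵐ ω ∂(Measure.infinitePi fun _ : ι => m), ∀ i j, ω i = ω j → i = j from
    this.mono fun ω hω i j => hω i j
  refine ae_all_iff.2 fun i => ae_all_iff.2 fun j => ?_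
  by_cases hij : i = j
  · exact ae_of_all _ fun _ _ => hij
  rw [← Measure.infinitePi_map_eval_prod (P := fun _ : ι => m) hij] at h
  exact (ae_of_ae_map (by fun_prop) h).mono fun ω hω hωij => absurd hωij hω

theorem ae_forall_notMem_of_measure_section_eq_zero [IsProbabilityMeasure m] {ι α : Type*}
    [Countable ι] [Fintype α] {f : α → ι} (hf : Injective f) {S : Set ((α → X) × X)}
    (hS : MeasurableSet S) :
    ∀ᵐ ω ∂(Measure.infinitePi fun _ : ι => m), ∀ l ∉ range f,
      m (Prod.mk (fun a => ω (f a)) ⁻¹' S) = 0 → ((fun a => ω (f a)), ω l) ∉ S := by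
  refine ae_all_iff.2 fun l => ?_
  by_cases hl : l ∈ range f
  · exact ae_of_all _ fun _ h => absurd hl h
  have hfl : Injective (Sum.elim f fun _ : Unit => l) :=
    hf.sumElim (fun _ _ _ => Subsingleton.elim _ _) fun a _ h => hl ⟨a, h⟩
  set D : Set ((α → X) × (Unit → X)) :=
    {p | m (Prod.mk p.1 ⁻¹' S) = 0 ∧ (p.1, p.2 ()) ∈ S}
  have hD : MeasurableSet D :=
    (measurable_fst (measurable_measure_prodMk_left hS (measurableSet_singleton 0))).inter
      (measurableSet_preimage (by fun_prop) hS)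
  have hD0 : (Measure.pi fun _ : α => m).prod (Measure.pi fun _ : Unit => m) D = 0 := by
    refine (Measure.measure_prod_null hD).2 (ae_of_all _ fun c => ?_)
    by_cases hc : m (Prod.mk c ⁻¹' S) = 0
    · exact measure_mono_null (fun y (hy : _ ∧ _) => hy.2)
        (Measure.pi_eval_preimage_null (fun _ : Unit => m) (i := ()) hc)
    · simp [D, hc]
  rw [← Measure.infinitePi_map_prodMk_comp m hfl, Measure.map_apply (by fun_prop) hD] at hD0
  filter_upwards [measure_eq_zero_iff_ae_notMem.1 hD0] with ω hω _ h0 hmem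
  exact hω ⟨h0, hmem⟩

end Measure

section Graph

variable {X : Type*}

def HasExtensionProperty (E : Set (X × X)) (V : Set X) : Prop :=
  ∀ U W : Finset X, ↑U ⊆ V → ↑W ⊆ V → Disjoint U W →
    ∃ v ∈ V, (∀ u ∈ U, (v, u) ∈ E) ∧ ∀ w ∈ W, (v, w) ∉ E

def extensionSet {ι κ : Type*} (E : Set (X × X)) (a : ι → X) (b : κ → X) : Set X :=
  {z | (∀ i, (a i, z) ∈ E) ∧ ∀ j, (b j, z) ∉ E}

theorem measurableSet_extensionSet {Q ι κ : Type*} [MeasurableSpace X] [MeasurableSpace Q]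
    [Countable ι] [Countable κ] {E : Set (X × X)} (hE : MeasurableSet E) {a : Q → ι → X}
    {b : Q → κ → X} (ha : Measurable a) (hb : Measurable b) :
    MeasurableSet {p : Q × X | p.2 ∈ extensionSet E (a p.1) (b p.1)} := by
  have hset : {p : Q × X | p.2 ∈ extensionSet E (a p.1) (b p.1)} =
      (⋂ i, (fun p : Q × X => (a p.1 i, p.2)) ⁻¹' E) ∩
        ⋂ j, ((fun p : Q × X => (b p.1 j, p.2)) ⁻¹' E)ᶜ := by
    ext p
    simp [extensionSet]
  rw [hset]
  exact (MeasurableSet.iInter fun i => measurableSet_preimage (by fun_prop) hE).inter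
    (MeasurableSet.iInter fun j => (measurableSet_preimage (by fun_prop) hE).compl)

namespace HasExtensionProperty

variable {E : Set (X × X)} {V : Set X}

theorem exists_notMem_of_card_lt (hV : HasExtensionProperty E V) {U W P F : Finset X}
    (hU : ↑U ⊆ V) (hW : ↑W ⊆ V) (hP : ↑P ⊆ V) (hUW : Disjoint U W) (hUP : Disjoint U P)
    (hWP : Disjoint W P) (hF : F.card < 2 ^ P.card) :
    ∃ v ∈ V, v ∉ F ∧ (∀ u ∈ U, (v, u) ∈ E) ∧ ∀ w ∈ W, (v, w) ∉ E := by
  classical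
  by_contra! hcon
  -- every `T ⊆ P` is the trace on `P` of the neighbourhood of a witness, which must lie in `F`
  have hcode : P.powerset ⊆ F.image fun v => P.filter fun p => (v, p) ∈ E := by
    intro T hT
    rw [Finset.mem_powerset] at hT
    obtain ⟨v, hvV, hvU, hvW⟩ := hV (U ∪ T) (W ∪ (P \ T))
      (by rw [Finset.coe_union]; exact union_subset hU ((Finset.coe_subset.2 hT).trans hP))
      (by
        rw [Finset.coe_union]
        exact union_subset hW ((Finset.coe_subset.2 Finset.sdiff_subset).trans hP))
      (by
        simp only [Finset.disjoint_union_left, Finset.disjoint_union_right]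
        exact ⟨⟨hUW, hWP.symm.mono_left hT⟩,
          hUP.mono_right Finset.sdiff_subset, Finset.disjoint_sdiff⟩)
    have hvF : v ∈ F := by
      by_contra hvF
      obtain ⟨w, hw, hvw⟩ := hcon v hvV hvF fun u hu => hvU u (Finset.mem_union_left _ hu)
      exact hvW w (Finset.mem_union_left _ hw) hvw
    refine Finset.mem_image.2 ⟨v, hvF, Finset.ext fun p => ?_⟩
    simp only [Finset.mem_filter]
    by_cases hpT : p ∈ T
    · exact iff_of_true ⟨hT hpT, hvU p (Finset.mem_union_right _ hpT)⟩ hpT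
    · exact iff_of_false (fun h => hvW p (Finset.mem_union_right _
        (Finset.mem_sdiff.2 ⟨h.1, hpT⟩)) h.2) hpT
  have := (Finset.card_le_card hcode).trans Finset.card_image_le
  rw [Finset.card_powerset] at this
  omega

theorem exists_add_le_mem_extensionSet {ω : ℕ → X} (hext : HasExtensionProperty E (range ω))
    (hsym : ∀ x y : X, (x, y) ∈ E → (y, x) ∈ E) (hinj : Injective ω) (n k : ℕ) :
    ∃ l, n + k ≤ l ∧
      ω l ∈ extensionSet E (fun i : Fin n => ω i) fun j : Fin k => ω (n + j) := by
  classical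
  set U := Finset.univ.image (ω ∘ fun i : Fin n => (i : ℕ))
  set W := Finset.univ.image (ω ∘ fun j : Fin k => n + j)
  set P := Finset.univ.image (ω ∘ fun t : Fin (n + k) => n + k + t)
  have hsub {α : Type} [Fintype α] (h : α → ℕ) :
      ↑(Finset.univ.image (ω ∘ h)) ⊆ range ω := by
    rw [Finset.coe_image]
    exact (image_subset_range _ _).trans (range_comp_subset_range _ _)
  have hdisj {α β : Type} [Fintype α] [Fintype β] {g : α → ℕ} {h : β → ℕ}
      (hgh : ∀ a b, g a ≠ h b) :
      Disjoint (Finset.univ.image (ω ∘ g)) (Finset.univ.image (ω ∘ h)) := by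
    simp only [Finset.disjoint_left, Finset.mem_image, Finset.mem_univ, true_and]
    rintro _ ⟨a, rfl⟩ ⟨b, hb⟩
    exact hgh a b (hinj hb).symm
  have hcard : (U ∪ W).card < 2 ^ P.card := by
    have hP : P.card = n + k := by
      rw [Finset.card_image_of_injective _ (hinj.comp fun s t hst => Fin.val_injective
        (Nat.add_left_cancel hst)), Finset.card_fin]
    calc (U ∪ W).card ≤ U.card + W.card := Finset.card_union_le _ _
      _ ≤ n + k := add_le_add (Finset.card_image_le.trans_eq (Finset.card_fin n))
          (Finset.card_image_le.trans_eq (Finset.card_fin k))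
      _ < 2 ^ P.card := hP ▸ Nat.lt_two_pow_self
  obtain ⟨v, ⟨l, rfl⟩, hlF, hlU, hlW⟩ :=
    hext.exists_notMem_of_card_lt (U := U) (W := W) (P := P) (hsub _) (hsub _) (hsub _)
      (hdisj fun i j => by omega) (hdisj fun i t => by omega) (hdisj fun j t => by omega) hcard
  refine ⟨l, ?_, fun i => hsym _ _ (hlU _ (Finset.mem_image_of_mem _ (Finset.mem_univ i))),
    fun j hj => hlW _ (Finset.mem_image_of_mem _ (Finset.mem_univ j)) (hsym _ _ hj)⟩
  by_contra! hl
  refine hlF ?_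
  rcases lt_or_ge l n with hln | hln
  · exact Finset.mem_union_left _ (Finset.mem_image.2 ⟨⟨l, hln⟩, Finset.mem_univ _, rfl⟩)
  · refine Finset.mem_union_right _
      (Finset.mem_image.2 ⟨⟨l - n, by omega⟩, Finset.mem_univ _, ?_⟩)
    simp only [comp_apply, Nat.add_sub_cancel' hln]

end HasExtensionProperty

end Graph

theorem measurable_universal_gives_positive_intersections_general
    {X : Type*} [MeasurableSpace X] (m : Measure X) [IsProbabilityMeasure m] [NullSingletonClass m]
    (E : Set (X × X)) (hE : MeasurableSet E)
    (hsym : ∀ x y : X, (x, y) ∈ E → (y, x) ∈ E)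
    -- purity: x ↦ E_x is injective mod 0
    (hpure : ∀ᵐ q ∂(m.prod m), q.1 ≠ q.2 →
      0 < m {y : X | ¬(((q.1, y) ∈ E) ↔ ((q.2, y) ∈ E))})
    (μ : Measure (ℕ → X)) (hμ : IsIID m μ)
    (huniv : ∀ᵐ x ∂μ, ∀ U W : Finset X,
      (↑U ⊆ Set.range x) → (↑W ⊆ Set.range x) → Disjoint U W →
      ∃ v ∈ Set.range x, (∀ u ∈ U, (v, u) ∈ E) ∧ ∀ w ∈ W, (v, w) ∉ E) :
    ∀ n k : ℕ, 0 < n → 0 < k →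
      ∀ᵐ q ∂((Measure.pi (fun _ : Fin n => m)).prod (Measure.pi (fun _ : Fin k => m))),
        (∀ i j, q.1 i ≠ q.2 j) →
        0 < m {z : X | (∀ i, (q.1 i, z) ∈ E) ∧ ∀ j, (q.2 j, z) ∉ E} := by
  obtain rfl := hμ.eq_infinitePi
  intro n k _ _
  have hF : Injective (Sum.elim (fun i : Fin n => (i : ℕ)) fun j : Fin k => n + j) :=
    Fin.val_injective.sumElim (fun _ _ h => Fin.val_injective (Nat.add_left_cancel h))
      fun i j h => by omega
  have hpos : ∀ᵐ ω ∂(Measure.infinitePi fun _ : ℕ => m),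
      0 < m (extensionSet E (fun i : Fin n => ω i) fun j : Fin k => ω (n + j)) := by
    filter_upwards [huniv, ae_injective_infinitePi (ae_fst_ne_snd_of_pure hE hpure),
      ae_forall_notMem_of_measure_section_eq_zero hF (measurableSet_extensionSet hE
        (a := fun c i => c (Sum.inl i)) (b := fun c j => c (Sum.inr j)) (by fun_prop)
        (by fun_prop))] with ω hext hinj hlate
    obtain ⟨l, hl, hmem⟩ :=
      HasExtensionProperty.exists_add_le_mem_extensionSet hext hsym hinj n k
    refine pos_iff_ne_zero.2 fun h0 => hlate l ?_ h0 hmem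
    rintro ⟨i | j, rfl⟩ <;> simp only [Sum.elim_inl, Sum.elim_inr] at hl <;> omega
  rw [← Measure.infinitePi_map_prodMk_comp m hF]
  exact ((ae_map_iff (by fun_prop) (measurableSet_lt measurable_const
    (measurable_measure_prodMk_left (measurableSet_extensionSet hE measurable_fst
      measurable_snd)))).2 hpos).mono fun q hq _ => hq

theorem measurable_universal_gives_positive_intersections
    {X : Type*} [MeasurableSpace X] (m : Measure X) [IsProbabilityMeasure m] [NullSingletonClass m]
    (E : Set (X × X)) (hE : MeasurableSet E)
    (hsym : ∀ x y : X, (x, y) ∈ E → (y, x) ∈ E) (hdiag : ∀ x : X, (x, x) ∉ E)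
    -- purity: x ↦ E_x is injective mod 0
    (hpure : ∀ᵐ q ∂(m.prod m), q.1 ≠ q.2 →
      0 < m {y : X | ¬(((q.1, y) ∈ E) ↔ ((q.2, y) ∈ E))})
    (μ : Measure (ℕ → X)) (hμ : IsIID m μ)
    (huniv : ∀ᵐ x ∂μ, ∀ U W : Finset X,
      (↑U ⊆ Set.range x) → (↑W ⊆ Set.range x) → Disjoint U W →
      ∃ v ∈ Set.range x, (∀ u ∈ U, (v, u) ∈ E) ∧ ∀ w ∈ W, (v, w) ∉ E) :
    ∀ n k : ℕ, 0 < n → 0 < k →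
      ∀ᵐ q ∂((Measure.pi (fun _ : Fin n => m)).prod (Measure.pi (fun _ : Fin k => m))),
        (∀ i j, q.1 i ≠ q.2 j) →
        0 < m {z : X | (∀ i, (q.1 i, z) ∈ E) ∧ ∀ j, (q.2 j, z) ∉ E} :=
  measurable_universal_gives_positive_intersections_general m E hE hsym hpure μ hμ huniv
end
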